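/- Let two agents at positions p, q ∈ ℤ² each have an admissible dance, supported on 2×2 subgrids D_p ∋ p and D_q ∋ q respectively, in an agent-only gridworld where all cells of D_p \ {p} and D_q \ {q} are unoccupied. If every constituent Move of the dance at p has support disjoint from D_q and every constituent Move of the dance at q has support disjoint from D_p, but D_p ∩ D_q ≠ ∅, then D_p ∩ D_q consists of a single cell which is diagonally opposite to p in D_p and diagonally opposite to q in D_q; consequently p and q differ by a 2-step bishop move (coordinate differences ±2 and ±2). -/

import Mathlib

/-!
Every cell of a `2 × 2` subgrid other than `p` and the cell diagonally opposite to `p` is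
adjacent to `p`, so the constituent Moves of the dance at `p` cover all of `square a` except
`oppCell a p`. Hence the hypothesis on the dance at `p` confines `square a ∩ square b` to
`{oppCell a p}`, and symmetrically to `{oppCell b q}`. Two `2 × 2` subgrids meeting in a single
cell are diagonal neighbours, and reflecting that common cell through the two subgrids gives
`p` and `q`, whose coordinates therefore differ by `±2`.
-/

/-- A cell of the gridworld. -/
abbrev Cell : Type := ℤ × ℤ

/-- Two cells are orthogonally adjacent if their `L¹`-distance is 1. -/
def Adj (c c' : Cell) : Prop :=
  (c.1 - c'.1).natAbs + (c.2 - c'.2).natAbs = 1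

/-- The `2 × 2` subgrid with bottom-left corner `a`. -/
def square (a : Cell) : Finset Cell :=
  {(a.1, a.2), (a.1 + 1, a.2), (a.1, a.2 + 1), (a.1 + 1, a.2 + 1)}

/-- The cell of the `2 × 2` subgrid `square a` diagonally opposite to `p`
(the unique cell of the subgrid at `L¹`-distance 2 from `p`). -/
def oppCell (a p : Cell) : Cell := (2 * a.1 + 1 - p.1, 2 * a.2 + 1 - p.2)

/-- Two agents' positions differ by a knight move: coordinate differences are
`±1` and `±2` in some order. -/
def KnightRel (p q : Cell) : Prop :=
  ((p.1 - q.1).natAbs = 1 ∧ (p.2 - q.2).natAbs = 2) ∨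
  ((p.1 - q.1).natAbs = 2 ∧ (p.2 - q.2).natAbs = 1)

theorem mem_square_iff {a c : Cell} :
    c ∈ square a ↔ (c.1 = a.1 ∨ c.1 = a.1 + 1) ∧ (c.2 = a.2 ∨ c.2 = a.2 + 1) := by
  simp only [square, Finset.mem_insert, Finset.mem_singleton, Prod.ext_iff]
  omega

theorem exists_adj_mem_square {a p : Cell} (hp : p ∈ square a) :
    ∃ d ∈ square a, Adj p d := by
  rw [mem_square_iff] at hp
  refine ⟨(2 * a.1 + 1 - p.1, p.2), ?_, ?_⟩
  · rw [mem_square_iff]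
    omega
  · simp only [Adj]
    omega

theorem eq_oppCell_of_mem_square {a p c : Cell} (hp : p ∈ square a) (hc : c ∈ square a)
    (hcp : c ≠ p) (hpc : ¬Adj p c) : c = oppCell a p := by
  rw [mem_square_iff] at hp hc
  simp only [Adj, oppCell, ne_eq, Prod.ext_iff] at hcp hpc ⊢
  omega

theorem square_inter_subset_oppCell {a p : Cell} {s : Finset Cell} (hp : p ∈ square a)
    (hmoves : ∀ d ∈ square a, Adj p d → Disjoint ({p, d} : Finset Cell) s) :
    square a ∩ s ⊆ {oppCell a p} := by
  intro c hc
  obtain ⟨hca, hcs⟩ := Finset.mem_inter.1 hc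
  obtain ⟨d, hd, hpd⟩ := exists_adj_mem_square hp
  have hps : p ∉ s := Finset.disjoint_left.1 (hmoves d hd hpd) (Finset.mem_insert_self p _)
  refine Finset.mem_singleton.2 (eq_oppCell_of_mem_square hp hca (ne_of_mem_of_not_mem hcs hps) ?_)
  intro hpc
  exact Finset.disjoint_right.1 (hmoves c hca hpc) hcs (by simp)

theorem natAbs_sub_eq_one_of_square_inter_eq_singleton {a b c : Cell}
    (h : square a ∩ square b = {c}) :
    (a.1 - b.1).natAbs = 1 ∧ (a.2 - b.2).natAbs = 1 := by
  have hc : c ∈ square a ∩ square b := by simp [h]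
  -- if `a.1 = b.1` (resp. `a.2 = b.2`), reflecting `c` within `square a` gives a second common cell
  have hx : (2 * a.1 + 1 - c.1, c.2) ∈ square a ∩ square b → (2 * a.1 + 1 - c.1, c.2) = c := by
    simp [h]
  have hy : (c.1, 2 * a.2 + 1 - c.2) ∈ square a ∩ square b → (c.1, 2 * a.2 + 1 - c.2) = c := by
    simp [h]
  simp only [Finset.mem_inter, mem_square_iff, Prod.ext_iff] at hc hx hy
  omega

theorem dances_interference_bishop_general (a b p q : Cell)
    (hp : p ∈ square a) (hq : q ∈ square b)
    (hma : ∀ d ∈ square a, Adj p d →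
      Disjoint ({p, d} : Finset Cell) (square b))
    (hmb : ∀ d ∈ square b, Adj q d →
      Disjoint ({q, d} : Finset Cell) (square a))
    (hinter : square a ∩ square b ≠ ∅) :
    square a ∩ square b = {oppCell a p} ∧ oppCell a p = oppCell b q ∧
      (p.1 - q.1).natAbs = 2 ∧ (p.2 - q.2).natAbs = 2 := by
  have hne : (square a ∩ square b).Nonempty := Finset.nonempty_iff_ne_empty.2 hinter
  have hA : square a ∩ square b = {oppCell a p} :=
    (Finset.Nonempty.subset_singleton_iff hne).1 (square_inter_subset_oppCell hp hma)
  have hB : square a ∩ square b = {oppCell b q} := by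
    rw [Finset.inter_comm] at hne ⊢
    exact (Finset.Nonempty.subset_singleton_iff hne).1 (square_inter_subset_oppCell hq hmb)
  have hopp : oppCell a p = oppCell b q := Finset.singleton_injective (hA.symm.trans hB)
  obtain ⟨h1, h2⟩ := natAbs_sub_eq_one_of_square_inter_eq_singleton hA
  refine ⟨hA, hopp, ?_⟩
  simp only [oppCell, Prod.ext_iff] at hopp
  omega

/-- two agents at `p` and `q` each have an admissible dance, on
the 2×2 subgrids `square a ∋ p` and `square b ∋ q` respectively, in an
agent-only gridworld with state `{p, q}` where the other cells of the two
subgrids are unoccupied. If every constituent Move of the dance at `p`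
(admissible at `p`) has support disjoint from `square b`, and every
constituent Move of the dance at `q` (admissible at `q`) has support disjoint
from `square a`, but `square a ∩ square b ≠ ∅`, then the intersection is a
single cell which is diagonally opposite to `p` in `square a` and diagonally
opposite to `q` in `square b`; consequently both coordinate differences of
`p` and `q` equal `±2` (a 2-step bishop move). -/
theorem dances_interference_bishop (a b p q : Cell) (hpq : p ≠ q)
    (hp : p ∈ square a) (hq : q ∈ square b)
    (hemptya : ∀ d ∈ square a, d ≠ p → d ∉ ({p, q} : Finset Cell))
    (hemptyb : ∀ d ∈ square b, d ≠ q → d ∉ ({p, q} : Finset Cell))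
    (hma : ∀ d ∈ square a, Adj p d →
      Disjoint ({p, d} : Finset Cell) (square b))
    (hmb : ∀ d ∈ square b, Adj q d →
      Disjoint ({q, d} : Finset Cell) (square a))
    (hinter : square a ∩ square b ≠ ∅) :
    square a ∩ square b = {oppCell a p} ∧ oppCell a p = oppCell b q ∧
      (p.1 - q.1).natAbs = 2 ∧ (p.2 - q.2).natAbs = 2 :=
  dances_interference_bishop_general a b p q hp hq hma hmb hinter
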